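/- Fix 0 < ε small and let χ : [-1,1] → [0, ε²] be smooth with χ ≡ ε² on [-ε, ε], χ ≡ 0 outside [-2ε, 2ε], and |χ'(r)| < |2r| for ε ≤ |r| ≤ 2ε. Then the function f(r,θ) = r² + χ(r)cos θ on [-1,1] × (ℝ/2πℤ) has exactly two critical points, at (r,θ) = (0,0) and (0,π), with Hessians diag(2, -ε²) and diag(2, ε²) respectively; so one critical point is a non-degenerate saddle and the other a non-degenerate local minimum. -/

import Mathlib

set_option maxHeartbeats 1000000 in
/-- For `0 < ε` small and `χ` a smooth bump with `χ ≡ ε²` on `[-ε,ε]`, `χ ≡ 0` for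
`|r| ≥ 2ε`, values in `[0, ε²]`, and `|χ'(r)| < |2r|` on `ε ≤ |r| ≤ 2ε`, the function
`f(r,θ) = r² + χ(r) cos θ` on `[-1,1] × (ℝ/2πℤ)` has exactly the two critical points
`(0,0)` and `(0,π)`, with Hessians `diag(2, -ε²)` and `diag(2, ε²)`: a non-degenerate
saddle and a non-degenerate local minimum. -/
theorem stmt_18 (ε : ℝ) (hε : 0 < ε) (hε' : ε < 1 / 2)
    (χ : ℝ → ℝ) (hχsm : ContDiff ℝ (⊤ : ℕ∞) χ)
    (hχrange : ∀ r, 0 ≤ χ r ∧ χ r ≤ ε ^ 2)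
    (hχ1 : ∀ r : ℝ, |r| ≤ ε → χ r = ε ^ 2)
    (hχ0 : ∀ r : ℝ, 2 * ε ≤ |r| → χ r = 0)
    (hχ' : ∀ r : ℝ, ε ≤ |r| → |r| ≤ 2 * ε → |deriv χ r| < |2 * r|)
    (f : ℝ × ℝ → ℝ) (hf : ∀ r θ : ℝ, f (r, θ) = r ^ 2 + χ r * Real.cos θ) :
    (∀ r θ : ℝ, r ∈ Set.Icc (-1 : ℝ) 1 → θ ∈ Set.Ico (0 : ℝ) (2 * Real.pi) →
      (fderiv ℝ f (r, θ) = 0 ↔ r = 0 ∧ (θ = 0 ∨ θ = Real.pi))) ∧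
    fderiv ℝ (fun p => fderiv ℝ f p ((1 : ℝ), (0 : ℝ))) ((0 : ℝ), (0 : ℝ)) ((1 : ℝ), (0 : ℝ)) = 2 ∧
    fderiv ℝ (fun p => fderiv ℝ f p ((1 : ℝ), (0 : ℝ))) ((0 : ℝ), (0 : ℝ)) ((0 : ℝ), (1 : ℝ)) = 0 ∧
    fderiv ℝ (fun p => fderiv ℝ f p ((0 : ℝ), (1 : ℝ))) ((0 : ℝ), (0 : ℝ)) ((0 : ℝ), (1 : ℝ)) = -ε ^ 2 ∧
    fderiv ℝ (fun p => fderiv ℝ f p ((1 : ℝ), (0 : ℝ))) ((0 : ℝ), Real.pi) ((1 : ℝ), (0 : ℝ)) = 2 ∧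
    fderiv ℝ (fun p => fderiv ℝ f p ((1 : ℝ), (0 : ℝ))) ((0 : ℝ), Real.pi) ((0 : ℝ), (1 : ℝ)) = 0 ∧
    fderiv ℝ (fun p => fderiv ℝ f p ((0 : ℝ), (1 : ℝ))) ((0 : ℝ), Real.pi) ((0 : ℝ), (1 : ℝ)) = ε ^ 2 ∧
    IsLocalMin f ((0 : ℝ), Real.pi) := by
  have hfe : f = fun p : ℝ × ℝ => p.1 ^ 2 + χ p.1 * Real.cos p.2 :=
    funext fun p => hf p.1 p.2
  -- the full derivative of f at any point
  have hd : ∀ r θ : ℝ, HasFDerivAt f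
      ((2 * r + deriv χ r * Real.cos θ) • ContinuousLinearMap.fst ℝ ℝ ℝ
        - (χ r * Real.sin θ) • ContinuousLinearMap.snd ℝ ℝ ℝ) (r, θ) := by
    intro r θ
    have hχd : HasDerivAt χ (deriv χ r) r :=
      ((hχsm.differentiable (by simp)) r).hasDerivAt
    have h1 : HasFDerivAt (fun p : ℝ × ℝ => p.1 ^ 2)
        ((2 * r ^ 1) • ContinuousLinearMap.fst ℝ ℝ ℝ) (r, θ) :=
      by
        have := (hasDerivAt_pow 2 r).comp_hasFDerivAt (r, θ)
          (hasFDerivAt_fst : HasFDerivAt Prod.fst (ContinuousLinearMap.fst ℝ ℝ ℝ) (r, θ))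
        exact this
    have h2 : HasFDerivAt (fun p : ℝ × ℝ => χ p.1)
        (deriv χ r • ContinuousLinearMap.fst ℝ ℝ ℝ) (r, θ) :=
      hχd.comp_hasFDerivAt _ hasFDerivAt_fst
    have h3 : HasFDerivAt (fun p : ℝ × ℝ => Real.cos p.2)
        ((-Real.sin θ) • ContinuousLinearMap.snd ℝ ℝ ℝ) (r, θ) :=
      by
        have := (Real.hasDerivAt_cos θ).comp_hasFDerivAt (r, θ)
          (hasFDerivAt_snd : HasFDerivAt Prod.snd (ContinuousLinearMap.snd ℝ ℝ ℝ) (r, θ))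
        exact this
    have h := h1.add (h2.mul h3)
    rw [hfe]
    refine h.congr_fderiv ?_
    apply ContinuousLinearMap.ext
    intro x
    simp only [ContinuousLinearMap.sub_apply, ContinuousLinearMap.add_apply,
      ContinuousLinearMap.smul_apply, ContinuousLinearMap.coe_fst',
      ContinuousLinearMap.coe_snd', smul_eq_mul]
    ring
  have hfd : ∀ r θ : ℝ, fderiv ℝ f (r, θ)
      = (2 * r + deriv χ r * Real.cos θ) • ContinuousLinearMap.fst ℝ ℝ ℝ
        - (χ r * Real.sin θ) • ContinuousLinearMap.snd ℝ ℝ ℝ :=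
    fun r θ => (hd r θ).fderiv
  have heval : ∀ r θ a b : ℝ, fderiv ℝ f (r, θ) (a, b)
      = (2 * r + deriv χ r * Real.cos θ) * a - χ r * Real.sin θ * b := by
    intro r θ a b
    rw [hfd]
    simp
  -- deriv of χ vanishes where χ is locally constant
  have hds : ∀ r : ℝ, |r| < ε → deriv χ r = 0 := by
    intro r hr
    have hmem : {x : ℝ | |x| < ε} ∈ nhds r :=
      (isOpen_lt continuous_abs continuous_const).mem_nhds hr
    have hev : χ =ᶠ[nhds r] fun _ => ε ^ 2 := by
      filter_upwards [hmem] with x hx using hχ1 x hx.le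
    rw [hev.deriv_eq, deriv_const]
  have hdb : ∀ r : ℝ, 2 * ε < |r| → deriv χ r = 0 := by
    intro r hr
    have hmem : {x : ℝ | 2 * ε < |x|} ∈ nhds r :=
      (isOpen_lt continuous_const continuous_abs).mem_nhds hr
    have hev : χ =ᶠ[nhds r] fun _ => 0 := by
      filter_upwards [hmem] with x hx using hχ0 x hx.le
    rw [hev.deriv_eq, deriv_const]
  have hχ00 : χ 0 = ε ^ 2 := hχ1 0 (by simp [hε.le])
  have hd00 : deriv χ 0 = 0 := hds 0 (by simpa using hε)
  -- common neighbourhood fact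
  have hnhds : ∀ θ₀ : ℝ, {p : ℝ × ℝ | |p.1| < ε} ∈ nhds ((0 : ℝ), θ₀) := by
    intro θ₀
    exact ((isOpen_lt continuous_abs continuous_const).preimage continuous_fst).mem_nhds
      (by simpa using hε)
  -- second derivative in r-direction
  have hg1 : ∀ θ₀ : ℝ, fderiv ℝ (fun p => fderiv ℝ f p ((1 : ℝ), (0 : ℝ))) ((0 : ℝ), θ₀)
      = (2 : ℝ) • ContinuousLinearMap.fst ℝ ℝ ℝ := by
    intro θ₀
    have he : fderiv ℝ (fun p => fderiv ℝ f p ((1 : ℝ), (0 : ℝ))) ((0 : ℝ), θ₀)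
        = fderiv ℝ (fun p : ℝ × ℝ => 2 * p.1) ((0 : ℝ), θ₀) := by
      apply Filter.EventuallyEq.fderiv_eq
      filter_upwards [hnhds θ₀] with p hp
      have h := heval p.1 p.2 1 0
      rw [hds p.1 hp] at h
      simpa using h
    rw [he, (hasFDerivAt_fst.const_mul (2 : ℝ)).fderiv]
  -- second derivative in θ-direction
  have hg2 : ∀ θ₀ : ℝ, fderiv ℝ (fun p => fderiv ℝ f p ((0 : ℝ), (1 : ℝ))) ((0 : ℝ), θ₀)
      = -((ε ^ 2) • (Real.cos θ₀ • ContinuousLinearMap.snd ℝ ℝ ℝ)) := by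
    intro θ₀
    have he : fderiv ℝ (fun p => fderiv ℝ f p ((0 : ℝ), (1 : ℝ))) ((0 : ℝ), θ₀)
        = fderiv ℝ (fun p : ℝ × ℝ => -(ε ^ 2 * Real.sin p.2)) ((0 : ℝ), θ₀) := by
      apply Filter.EventuallyEq.fderiv_eq
      filter_upwards [hnhds θ₀] with p hp
      have h := heval p.1 p.2 0 1
      rw [hχ1 p.1 hp.le] at h
      simpa using h
    rw [he]
    have hs : HasFDerivAt (fun p : ℝ × ℝ => -(ε ^ 2 * Real.sin p.2))
        (-((ε ^ 2) • (Real.cos θ₀ • ContinuousLinearMap.snd ℝ ℝ ℝ))) ((0 : ℝ), θ₀) := by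
      have h1 : HasFDerivAt (fun p : ℝ × ℝ => Real.sin p.2)
          (Real.cos θ₀ • ContinuousLinearMap.snd ℝ ℝ ℝ) ((0 : ℝ), θ₀) :=
        by
          have := (Real.hasDerivAt_sin θ₀).comp_hasFDerivAt ((0 : ℝ), θ₀)
            (hasFDerivAt_snd : HasFDerivAt Prod.snd (ContinuousLinearMap.snd ℝ ℝ ℝ) ((0 : ℝ), θ₀))
          exact this
      exact (h1.const_mul (ε ^ 2)).neg
    rw [hs.fderiv]
  -- local minimum at (0, π)
  have hmin : IsLocalMin f ((0 : ℝ), Real.pi) := by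
    apply Filter.Eventually.of_forall
    intro p
    rw [hfe]
    simp only
    have h1 := (hχrange p.1).1
    have h2 := (hχrange p.1).2
    have h3 := Real.neg_one_le_cos p.2
    have h4 := Real.cos_le_one p.2
    have h5 : Real.cos Real.pi = -1 := Real.cos_pi
    rw [hχ00, h5]
    nlinarith [sq_nonneg p.1]
  refine ⟨?_, ?_, ?_, ?_, ?_, ?_, ?_, hmin⟩
  · -- critical points
    intro r θ _ hθ
    constructor
    · intro h
      have e1 : (2 * r + deriv χ r * Real.cos θ) = 0 := by
        have := heval r θ 1 0
        rw [h] at this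
        simpa using this.symm
      have e2 : χ r * Real.sin θ = 0 := by
        have := heval r θ 0 1
        rw [h] at this
        simpa using this.symm
      have hr0 : r = 0 := by
        rcases lt_trichotomy (|r|) ε with h1 | h1 | h1
        · have := hds r h1
          rw [this] at e1
          simpa using e1
        · exfalso
          have h2 : |r| ≤ 2 * ε := by nlinarith [abs_nonneg r]
          have hlt := hχ' r h1.ge h2
          have hb : |deriv χ r * Real.cos θ| < |2 * r| := by
            calc |deriv χ r * Real.cos θ| = |deriv χ r| * |Real.cos θ| := abs_mul _ _
            _ ≤ |deriv χ r| * 1 := by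
                have := Real.abs_cos_le_one θ
                nlinarith [abs_nonneg (deriv χ r)]
            _ = |deriv χ r| := mul_one _
            _ < |2 * r| := hlt
          have hne : 2 * r + deriv χ r * Real.cos θ ≠ 0 := by
            intro hc
            have : deriv χ r * Real.cos θ = -(2 * r) := by linarith
            rw [this, abs_neg] at hb
            exact lt_irrefl _ hb
          exact hne e1
        · rcases lt_or_ge (2 * ε) (|r|) with h2 | h2
          · exfalso
            have hr := hdb r h2
            rw [hr] at e1
            have : r = 0 := by simpa using e1
            rw [this] at h2
            simp at h2
            linarith
          · exfalso
            have hlt := hχ' r h1.le h2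
            have hb : |deriv χ r * Real.cos θ| < |2 * r| := by
              calc |deriv χ r * Real.cos θ| = |deriv χ r| * |Real.cos θ| := abs_mul _ _
              _ ≤ |deriv χ r| * 1 := by
                  have := Real.abs_cos_le_one θ
                  nlinarith [abs_nonneg (deriv χ r)]
              _ = |deriv χ r| := mul_one _
              _ < |2 * r| := hlt
            have hne : 2 * r + deriv χ r * Real.cos θ ≠ 0 := by
              intro hc
              have : deriv χ r * Real.cos θ = -(2 * r) := by linarith
              rw [this, abs_neg] at hb
              exact lt_irrefl _ hb
            exact hne e1
      refine ⟨hr0, ?_⟩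
      rw [hr0, hχ00] at e2
      have hsin : Real.sin θ = 0 := by
        have hε2 : ε ^ 2 ≠ 0 := by positivity
        exact (mul_eq_zero.1 e2).resolve_left hε2
      obtain ⟨n, hn⟩ := Real.sin_eq_zero_iff.1 hsin
      have hπ := Real.pi_pos
      obtain ⟨hθ0, hθ2⟩ := hθ
      have hn0 : (0 : ℤ) ≤ n := by
        by_contra hc
        push_neg at hc
        have hle : n ≤ -1 := by omega
        have : (n : ℝ) ≤ -1 := by exact_mod_cast hle
        nlinarith
      have hn2 : n < 2 := by
        by_contra hc
        push_neg at hc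
        have : (2 : ℝ) ≤ (n : ℝ) := by exact_mod_cast hc
        nlinarith
      have hcase : n = 0 ∨ n = 1 := by omega
      rcases hcase with h | h <;> subst h
      · left; simpa using hn.symm
      · right; rw [← hn]; simp
    · rintro ⟨hr0, hθ0⟩
      subst hr0
      apply ContinuousLinearMap.ext
      intro x
      have hx : fderiv ℝ f (0, θ) (x.1, x.2) =
          (2 * 0 + deriv χ 0 * Real.cos θ) * x.1 - χ 0 * Real.sin θ * x.2 := heval 0 θ x.1 x.2
      rcases hθ0 with h | h <;> subst h <;>
        simpa [hd00, Real.sin_pi] using hx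
  · rw [hg1 0]; simp
  · rw [hg1 0]; simp
  · rw [hg2 0]; simp
  · rw [hg1 Real.pi]; simp
  · rw [hg1 Real.pi]; simp
  · rw [hg2 Real.pi]; simp
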